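/- Let Ω⊂ℝ^n be a bounded domain with a C^∞(Ω̄) defining function ρ such that (1−|∇ρ|²)/ρ extends to a function in C^∞(Ω̄). Let a>0, b, c be real constants and s a positive integer with a s(s−1) + b s + c = 0, and let L = aρ²Δ + bρ∇ρ·∇ + c. Then for every ψ ∈ C^∞(Ω̄) there exist η_1, η_2 ∈ C^∞(Ω̄) such that L(ψρ^s log ρ) = η_1 ρ^{s+1} log ρ + η_2 in Ω. -/

import Mathlib

open Set Filter Topology

noncomputable section

abbrev En (n : ℕ) : Type := EuclideanSpace ℝ (Fin n)

variable {n : ℕ}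

/-- The partial derivative `∂ᵢ w` (computed with the full-space derivative). -/
noncomputable def pd (i : Fin n) (w : En n → ℝ) (x : En n) : ℝ :=
  fderiv ℝ w x (EuclideanSpace.single i 1)

/-- Iterated partial derivatives along a list of coordinate directions. -/
noncomputable def pdAll : List (Fin n) → (En n → ℝ) → En n → ℝ
  | [], w => w
  | i :: l, w => pd i (pdAll l w)

/-- Second-order partial derivative `∂ᵢ∂ⱼ w`. -/
noncomputable def pd2 (i j : Fin n) (w : En n → ℝ) : En n → ℝ := pd i (pd j w)

/-- The sup norm `|w|_{L^∞(E)}`. -/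
noncomputable def supNorm (E : Set (En n)) (w : En n → ℝ) : ℝ :=
  sSup ((fun x => |w x|) '' E)

/-- The Hölder seminorm `[w]_{C^β(E)}`. -/
noncomputable def holderSemi (β : ℝ) (E : Set (En n)) (w : En n → ℝ) : ℝ :=
  sSup ((fun p : En n × En n => |w p.1 - w p.2| / dist p.1 p.2 ^ β) '' (E ×ˢ E))

/-- The Hölder norm `|w|_{C^β(E)} = |w|_{L^∞(E)} + [w]_{C^β(E)}`. -/
noncomputable def holderNorm (β : ℝ) (E : Set (En n)) (w : En n → ℝ) : ℝ :=
  supNorm E w + holderSemi β E w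

/-- `w` is `β`-Hölder continuous on `E`. -/
def IsHolderOn (β : ℝ) (E : Set (En n)) (w : En n → ℝ) : Prop :=
  ∃ C : ℝ, ∀ x ∈ E, ∀ y ∈ E, |w x - w y| ≤ C * dist x y ^ β

/-- `w` is bounded on `E`. -/
def BoundedOn (E : Set (En n)) (w : En n → ℝ) : Prop :=
  ∃ M : ℝ, ∀ x ∈ E, |w x| ≤ M

/-- `w ∈ C^{k,β}(Ē)`: `w` is `C^k` in the open set `Ω`, all derivatives of order `≤ k`
extend continuously to the closure, and the order-`k` derivatives are `β`-Hölder. -/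
def MemHolderBar (k : ℕ) (β : ℝ) (Ω : Set (En n)) (w : En n → ℝ) : Prop :=
  ContinuousOn w (closure Ω) ∧ ContDiffOn ℝ k w Ω ∧
  (∀ l : List (Fin n), l.length ≤ k →
    ∃ g : En n → ℝ, ContinuousOn g (closure Ω) ∧ EqOn (pdAll l w) g Ω) ∧
  (∀ l : List (Fin n), l.length = k → IsHolderOn β Ω (pdAll l w))

/-- `w ∈ C^{k,β}(Ω)`: the interior Hölder class (Hölder on compact subsets). -/
def MemHolderLoc (k : ℕ) (β : ℝ) (Ω : Set (En n)) (w : En n → ℝ) : Prop :=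
  ContDiffOn ℝ k w Ω ∧
  ∀ K : Set (En n), K ⊆ Ω → IsCompact K →
    ∀ l : List (Fin n), l.length = k → IsHolderOn β K (pdAll l w)

/-- The norm `|w|_{C^{k,β}(Ē)}`. -/
noncomputable def holderNormCk (k : ℕ) (β : ℝ) (Ω : Set (En n)) (w : En n → ℝ) : ℝ :=
  (∑ i ∈ Finset.range (k + 1), ∑ v : Fin i → Fin n, supNorm Ω (pdAll (List.ofFn v) w)) +
  ∑ v : Fin k → Fin n, holderSemi β Ω (pdAll (List.ofFn v) w)

/-- The uniformly degenerate operator `L = ρ² a_{ij}∂_{ij} + ρ b_i ∂_i + c`. -/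
noncomputable def Lop (ρ : En n → ℝ) (a : Fin n → Fin n → En n → ℝ)
    (b : Fin n → En n → ℝ) (c : En n → ℝ) (w : En n → ℝ) (x : En n) : ℝ :=
  (ρ x) ^ 2 * ∑ i, ∑ j, a i j x * pd2 i j w x
    + ρ x * ∑ i, b i x * pd i w x + c x * w x

/-- Symmetry and uniform ellipticity `λ|ξ|² ≤ a_{ij}ξ_iξ_j ≤ Λ|ξ|²` on `E`. -/
def Elliptic (E : Set (En n)) (a : Fin n → Fin n → En n → ℝ) (lam Lam : ℝ) : Prop :=
  (∀ i j, ∀ x : En n, a i j x = a j i x) ∧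
  ∀ x ∈ E, ∀ ξ : Fin n → ℝ,
    lam * (∑ i, ξ i ^ 2) ≤ (∑ i, ∑ j, a i j x * ξ i * ξ j) ∧
    (∑ i, ∑ j, a i j x * ξ i * ξ j) ≤ Lam * (∑ i, ξ i ^ 2)

/-- The characteristic polynomial `P(μ) = μ(μ-1)a_{ij}ν_iν_j + μ b_iν_i + c`,
expressed through a function `ν` recording the boundary values of `∇ρ`. -/
def Pchar (a : Fin n → Fin n → En n → ℝ) (b : Fin n → En n → ℝ) (c : En n → ℝ)
    (ν : En n → Fin n → ℝ) (μ : ℝ) (x : En n) : ℝ :=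
  μ * (μ - 1) * (∑ i, ∑ j, a i j x * ν x i * ν x j) + μ * (∑ i, b i x * ν x i) + c x

/-- `ρ` is a defining function for `Ω`, with `ν` the continuous extension of `∇ρ`
to the closure, of unit length on the boundary. -/
def DefiningFn (Ω : Set (En n)) (ρ : En n → ℝ) (ν : En n → Fin n → ℝ) : Prop :=
  (∀ x ∈ Ω, 0 < ρ x) ∧ (∀ x ∈ frontier Ω, ρ x = 0) ∧
  ContinuousOn ρ (closure Ω) ∧ ContDiffOn ℝ 1 ρ Ω ∧
  (∀ i, ContinuousOn (fun x => ν x i) (closure Ω)) ∧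
  (∀ x ∈ Ω, ∀ i, ν x i = pd i ρ x) ∧
  (∀ x ∈ frontier Ω, (∑ i, (ν x i) ^ 2) = 1)

end

open Set Filter Topology

/-- `w ∈ C^∞(Ω̄)`: smooth in `Ω` with all derivatives extending continuously to `Ω̄`. -/
def SmoothBar {n : ℕ} (Ω : Set (En n)) (w : En n → ℝ) : Prop :=
  ContDiffOn ℝ (⊤ : ℕ∞) w Ω ∧
  ∀ l : List (Fin n), ∃ g : En n → ℝ,
    ContinuousOn g (closure Ω) ∧ EqOn (pdAll l w) g Ω

/-- The operator `L = aρ²Δ + bρ∇ρ·∇ + c` (with constant coefficients `a, b, c`). -/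
noncomputable def LopEx {n : ℕ} (ρ : En n → ℝ) (a b c : ℝ) (w : En n → ℝ) (x : En n) : ℝ :=
  a * (ρ x) ^ 2 * (∑ i, pd2 i i w x)
    + b * ρ x * (∑ i, pd i ρ x * pd i w x) + c * w x

/-! Write `ψ ρ^s log ρ = ψ · F(ρ)` with `F(t) = t^s log t`. By the chain rule,
`L(ψ F(ρ)) = aρ²(F(ρ)Δψ + 2F'(ρ)∇ρ·∇ψ + ψ(F''(ρ)|∇ρ|² + F'(ρ)Δρ))`
`+ bρ(F(ρ)∇ρ·∇ψ + ψF'(ρ)|∇ρ|²) + cψF(ρ)`,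
and `ρF'(ρ) = ρ^s (s log ρ + 1)`, `ρ²F''(ρ) = ρ^s (s(s-1) log ρ + 2s - 1)`, so every term is a
smooth function times `ρ^s log ρ` or times `ρ^s`. The only term of the first kind without an
extra factor `ρ` is `ψ ρ^s log ρ ((as(s-1) + bs)|∇ρ|² + c)`; since `|∇ρ|² = 1 - ρq` and `s` is an
indicial root, it equals `cψq · ρ^{s+1} log ρ`. -/

theorem natCast_mul_pow_sub_one {t : ℝ} (ht : t ≠ 0) (s : ℕ) :
    (s : ℝ) * t ^ (s - 1) = s * t ^ s / t := by
  rcases Nat.eq_zero_or_pos s with rfl | hs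
  · simp
  · rw [← pow_sub_one_mul hs.ne' t]
    field_simp

-- Derivatives are written with a division by `t` instead of `t ^ (s - 1)`, so `s = 0` is covered.
theorem hasDerivAt_pow_mul_log (s : ℕ) {t : ℝ} (ht : t ≠ 0) :
    HasDerivAt (fun t => t ^ s * Real.log t) (t ^ s * (s * Real.log t + 1) / t) t := by
  refine ((hasDerivAt_pow s t).mul (Real.hasDerivAt_log ht)).congr_deriv ?_
  rw [natCast_mul_pow_sub_one ht]
  field_simp

theorem hasDerivAt_pow_mul_log_div (s : ℕ) {t : ℝ} (ht : t ≠ 0) :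
    HasDerivAt (fun t => t ^ s * (s * Real.log t + 1) / t)
      (t ^ s * (s * (s - 1) * Real.log t + 2 * s - 1) / t ^ 2) t := by
  refine (((hasDerivAt_pow s t).mul
    (((Real.hasDerivAt_log ht).const_mul (s : ℝ)).add_const 1)).div
      (hasDerivAt_id t) ht).congr_deriv ?_
  rw [natCast_mul_pow_sub_one ht]
  simp only [id, Pi.mul_apply]
  field_simp
  ring

section PartialDerivatives

variable {n : ℕ} {Ω : Set (En n)}

theorem pd_eq_of_hasFDerivAt {w : En n → ℝ} {D : En n →L[ℝ] ℝ} {x : En n}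
    (h : HasFDerivAt w D x) (i : Fin n) : pd i w x = D (EuclideanSpace.single i 1) := by
  rw [pd, h.fderiv]

theorem pd_congr_of_eqOn (hΩ : IsOpen Ω) {f g : En n → ℝ} (h : EqOn f g Ω) (i : Fin n) :
    EqOn (pd i f) (pd i g) Ω := fun x hx => by
  rw [pd, pd, (eventuallyEq_of_mem (hΩ.mem_nhds hx) h).fderiv_eq]

theorem pd_add {f g : En n → ℝ} {x : En n} (hf : DifferentiableAt ℝ f x)
    (hg : DifferentiableAt ℝ g x) (i : Fin n) :
    pd i (fun y => f y + g y) x = pd i f x + pd i g x := by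
  simp [pd, fderiv_fun_add hf hg]

theorem pd_mul {f g : En n → ℝ} {x : En n} (hf : DifferentiableAt ℝ f x)
    (hg : DifferentiableAt ℝ g x) (i : Fin n) :
    pd i (fun y => f y * g y) x = pd i f x * g x + f x * pd i g x := by
  simp only [pd, fderiv_fun_mul hf hg, add_apply, smul_apply, smul_eq_mul]
  ring

theorem pd_comp {F : ℝ → ℝ} {F' : ℝ} {ρ : En n → ℝ} {x : En n} (hF : HasDerivAt F F' (ρ x))
    (hρ : DifferentiableAt ℝ ρ x) (i : Fin n) :
    pd i (fun y => F (ρ y)) x = F' * pd i ρ x := by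
  have h : HasFDerivAt (fun y => F (ρ y)) (F' • fderiv ℝ ρ x) x :=
    hF.comp_hasFDerivAt x hρ.hasFDerivAt
  rw [pd_eq_of_hasFDerivAt h]
  rfl

theorem pd_mul_comp {ψ ρ : En n → ℝ} {F : ℝ → ℝ} {F' : ℝ} {x : En n}
    (hψ : DifferentiableAt ℝ ψ x) (hρ : DifferentiableAt ℝ ρ x) (hF : HasDerivAt F F' (ρ x))
    (i : Fin n) :
    pd i (fun y => ψ y * F (ρ y)) x = pd i ψ x * F (ρ x) + ψ x * F' * pd i ρ x := by
  have hFρ : DifferentiableAt ℝ (fun y => F (ρ y)) x := hF.differentiableAt.comp x hρ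
  rw [pd_mul hψ hFρ, pd_comp hF hρ, mul_assoc]

theorem contDiffOn_pd (hΩ : IsOpen Ω) {f : En n → ℝ} {k m : WithTop ℕ∞}
    (hf : ContDiffOn ℝ k f Ω) (hmk : m + 1 ≤ k) (i : Fin n) : ContDiffOn ℝ m (pd i f) Ω :=
  (hf.fderiv_of_isOpen hΩ hmk).clm_apply contDiffOn_const

theorem pd2_mul_comp (hΩ : IsOpen Ω) {ψ ρ : En n → ℝ} (hψ : ContDiffOn ℝ 2 ψ Ω)
    (hρ : ContDiffOn ℝ 2 ρ Ω) {S : Set ℝ} {F F₁ F₂ : ℝ → ℝ} (hρS : MapsTo ρ Ω S)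
    (hF : ∀ t ∈ S, HasDerivAt F (F₁ t) t) (hF₁ : ∀ t ∈ S, HasDerivAt F₁ (F₂ t) t)
    {x : En n} (hx : x ∈ Ω) (i : Fin n) :
    pd2 i i (fun y => ψ y * F (ρ y)) x =
      pd2 i i ψ x * F (ρ x) + 2 * F₁ (ρ x) * (pd i ρ x * pd i ψ x)
        + ψ x * (F₂ (ρ x) * pd i ρ x ^ 2 + F₁ (ρ x) * pd2 i i ρ x) := by
  have hdiff {f : En n → ℝ} {k : WithTop ℕ∞} (hf : ContDiffOn ℝ k f Ω) (hk : k ≠ 0) {y : En n}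
      (hy : y ∈ Ω) : DifferentiableAt ℝ f y :=
    (hf.contDiffAt (hΩ.mem_nhds hy)).differentiableAt hk
  have hψ' := hdiff (contDiffOn_pd hΩ hψ (m := 1) le_rfl i) one_ne_zero hx
  have hρ' := hdiff (contDiffOn_pd hΩ hρ (m := 1) le_rfl i) one_ne_zero hx
  have hψx := hdiff hψ two_ne_zero hx
  have hρx := hdiff hρ two_ne_zero hx
  have hfirst : EqOn (pd i fun y => ψ y * F (ρ y))
      (fun y => pd i ψ y * F (ρ y) + ψ y * pd i ρ y * F₁ (ρ y)) Ω := fun y hy => by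
    rw [pd_mul_comp (hdiff hψ two_ne_zero hy) (hdiff hρ two_ne_zero hy) (hF _ (hρS hy))]
    ring
  have hFρ : DifferentiableAt ℝ (fun y => F (ρ y)) x :=
    (hF _ (hρS hx)).differentiableAt.comp x hρx
  have hF₁ρ : DifferentiableAt ℝ (fun y => F₁ (ρ y)) x :=
    (hF₁ _ (hρS hx)).differentiableAt.comp x hρx
  rw [pd2, pd_congr_of_eqOn hΩ hfirst i hx,
    pd_add (hψ'.fun_mul hFρ) ((hψx.fun_mul hρ').fun_mul hF₁ρ),
    pd_mul_comp hψ' hρx (hF _ (hρS hx)), pd_mul_comp (hψx.fun_mul hρ') hρx (hF₁ _ (hρS hx)),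
    pd_mul hψx hρ']
  simp only [pd2]
  ring

end PartialDerivatives

section Operators

variable {n : ℕ} {Ω : Set (En n)}

noncomputable def lap (w : En n → ℝ) (x : En n) : ℝ := ∑ i, pd2 i i w x

noncomputable def gradDot (u v : En n → ℝ) (x : En n) : ℝ := ∑ i, pd i u x * pd i v x

theorem gradDot_mul_comp (u : En n → ℝ) {ψ ρ : En n → ℝ} {F : ℝ → ℝ} {F' : ℝ} {x : En n}
    (hψ : DifferentiableAt ℝ ψ x) (hρ : DifferentiableAt ℝ ρ x) (hF : HasDerivAt F F' (ρ x)) :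
    gradDot u (fun y => ψ y * F (ρ y)) x =
      gradDot u ψ x * F (ρ x) + ψ x * F' * gradDot u ρ x := by
  simp only [gradDot, pd_mul_comp hψ hρ hF, Finset.sum_mul, Finset.mul_sum,
    ← Finset.sum_add_distrib]
  exact Finset.sum_congr rfl fun i _ => by ring

theorem lap_mul_comp (hΩ : IsOpen Ω) {ψ ρ : En n → ℝ} (hψ : ContDiffOn ℝ 2 ψ Ω)
    (hρ : ContDiffOn ℝ 2 ρ Ω) {S : Set ℝ} {F F₁ F₂ : ℝ → ℝ} (hρS : MapsTo ρ Ω S)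
    (hF : ∀ t ∈ S, HasDerivAt F (F₁ t) t) (hF₁ : ∀ t ∈ S, HasDerivAt F₁ (F₂ t) t)
    {x : En n} (hx : x ∈ Ω) :
    lap (fun y => ψ y * F (ρ y)) x =
      lap ψ x * F (ρ x) + 2 * F₁ (ρ x) * gradDot ρ ψ x
        + ψ x * (F₂ (ρ x) * gradDot ρ ρ x + F₁ (ρ x) * lap ρ x) := by
  simp only [lap, gradDot, pd2_mul_comp hΩ hψ hρ hρS hF hF₁ hx, Finset.sum_mul, Finset.mul_sum,
    ← Finset.sum_add_distrib]
  exact Finset.sum_congr rfl fun i _ => by ring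

theorem lopEx_mul_comp (a b c : ℝ) (hΩ : IsOpen Ω) {ψ ρ : En n → ℝ} (hψ : ContDiffOn ℝ 2 ψ Ω)
    (hρ : ContDiffOn ℝ 2 ρ Ω) {S : Set ℝ} {F F₁ F₂ : ℝ → ℝ} (hρS : MapsTo ρ Ω S)
    (hF : ∀ t ∈ S, HasDerivAt F (F₁ t) t) (hF₁ : ∀ t ∈ S, HasDerivAt F₁ (F₂ t) t)
    {x : En n} (hx : x ∈ Ω) :
    LopEx ρ a b c (fun y => ψ y * F (ρ y)) x =
      a * ρ x ^ 2 * (lap ψ x * F (ρ x) + 2 * F₁ (ρ x) * gradDot ρ ψ x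
        + ψ x * (F₂ (ρ x) * gradDot ρ ρ x + F₁ (ρ x) * lap ρ x))
      + b * ρ x * (gradDot ρ ψ x * F (ρ x) + ψ x * F₁ (ρ x) * gradDot ρ ρ x)
      + c * (ψ x * F (ρ x)) := by
  have hdiff {f : En n → ℝ} (hf : ContDiffOn ℝ 2 f Ω) : DifferentiableAt ℝ f x :=
    (hf.contDiffAt (hΩ.mem_nhds hx)).differentiableAt two_ne_zero
  rw [← lap_mul_comp hΩ hψ hρ hρS hF hF₁ hx,
    ← gradDot_mul_comp ρ (hdiff hψ) (hdiff hρ) (hF _ (hρS hx))]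
  rfl

end Operators

section SmoothBarClosure

open scoped ContDiff

variable {n : ℕ} {Ω : Set (En n)}

theorem pdAll_append (l : List (Fin n)) (j : Fin n) (w : En n → ℝ) :
    pdAll (l ++ [j]) w = pdAll l (pd j w) := by
  induction l with
  | nil => rfl
  | cons i l ih => simp [pdAll, ih]

theorem pdAll_congr_of_eqOn (hΩ : IsOpen Ω) {f g : En n → ℝ} (h : EqOn f g Ω)
    (l : List (Fin n)) : EqOn (pdAll l f) (pdAll l g) Ω := by
  induction l with
  | nil => exact h
  | cons i l ih => exact pd_congr_of_eqOn hΩ ih i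

theorem contDiffOn_pdAll (hΩ : IsOpen Ω) {f : En n → ℝ} (hf : ContDiffOn ℝ ∞ f Ω)
    (l : List (Fin n)) : ContDiffOn ℝ ∞ (pdAll l f) Ω := by
  induction l with
  | nil => exact hf
  | cons i l ih => exact contDiffOn_pd hΩ ih (by simp) i

theorem pdAll_add (hΩ : IsOpen Ω) {f g : En n → ℝ} (hf : ContDiffOn ℝ ∞ f Ω)
    (hg : ContDiffOn ℝ ∞ g Ω) (l : List (Fin n)) :
    EqOn (pdAll l fun y => f y + g y) (fun y => pdAll l f y + pdAll l g y) Ω := by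
  induction l with
  | nil => exact fun _ _ => rfl
  | cons i l ih =>
    intro x hx
    have hdiff {w : En n → ℝ} (hw : ContDiffOn ℝ ∞ w Ω) : DifferentiableAt ℝ w x :=
      (hw.contDiffAt (hΩ.mem_nhds hx)).differentiableAt (by simp)
    exact (pd_congr_of_eqOn hΩ ih i hx).trans
      (pd_add (hdiff (contDiffOn_pdAll hΩ hf l)) (hdiff (contDiffOn_pdAll hΩ hg l)) i)

theorem smoothBar_const (c : ℝ) : SmoothBar Ω fun _ => c := by
  have hpd (l : List (Fin n)) : ∃ k : ℝ, pdAll l (fun _ : En n => c) = fun _ => k := by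
    induction l with
    | nil => exact ⟨c, rfl⟩
    | cons i l ih =>
      obtain ⟨k, hk⟩ := ih
      exact ⟨0, funext fun x => by simp [pdAll, hk, pd]⟩
  refine ⟨contDiffOn_const, fun l => ?_⟩
  obtain ⟨k, hk⟩ := hpd l
  exact ⟨fun _ => k, continuousOn_const, by rw [hk]; exact eqOn_refl _ _⟩

theorem SmoothBar.pd (hΩ : IsOpen Ω) {f : En n → ℝ} (hf : SmoothBar Ω f) (i : Fin n) :
    SmoothBar Ω (pd i f) := by
  refine ⟨contDiffOn_pd hΩ hf.1 (by simp) i, fun l => ?_⟩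
  rw [← pdAll_append]
  exact hf.2 (l ++ [i])

theorem SmoothBar.add (hΩ : IsOpen Ω) {f g : En n → ℝ} (hf : SmoothBar Ω f)
    (hg : SmoothBar Ω g) : SmoothBar Ω fun x => f x + g x := by
  refine ⟨hf.1.add hg.1, fun l => ?_⟩
  obtain ⟨F, hFc, hFe⟩ := hf.2 l
  obtain ⟨G, hGc, hGe⟩ := hg.2 l
  refine ⟨fun x => F x + G x, hFc.add hGc, fun x hx => ?_⟩
  exact (pdAll_add hΩ hf.1 hg.1 l hx).trans (congrArg₂ (· + ·) (hFe hx) (hGe hx))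

theorem SmoothBar.mul (hΩ : IsOpen Ω) {f g : En n → ℝ} (hf : SmoothBar Ω f)
    (hg : SmoothBar Ω g) : SmoothBar Ω fun x => f x * g x := by
  refine ⟨hf.1.mul hg.1, fun l => ?_⟩
  induction l using List.reverseRecOn generalizing f g with
  | nil =>
    obtain ⟨F, hFc, hFe⟩ := hf.2 []
    obtain ⟨G, hGc, hGe⟩ := hg.2 []
    exact ⟨fun x => F x * G x, hFc.mul hGc, fun x hx => by
      simp only [pdAll]
      rw [← hFe hx, ← hGe hx]
      rfl⟩
  | append_singleton l j ih =>
    obtain ⟨H₁, hH₁c, hH₁e⟩ := ih (hf.pd hΩ j) hg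
    obtain ⟨H₂, hH₂c, hH₂e⟩ := ih hf (hg.pd hΩ j)
    have hLeibniz : EqOn (_root_.pd j fun x => f x * g x)
        (fun x => _root_.pd j f x * g x + f x * _root_.pd j g x) Ω := fun x hx =>
      pd_mul ((hf.1.contDiffAt (hΩ.mem_nhds hx)).differentiableAt (by simp))
        ((hg.1.contDiffAt (hΩ.mem_nhds hx)).differentiableAt (by simp)) j
    refine ⟨fun x => H₁ x + H₂ x, hH₁c.add hH₂c, fun x hx => ?_⟩
    rw [pdAll_append, pdAll_congr_of_eqOn hΩ hLeibniz l hx,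
      pdAll_add hΩ ((hf.pd hΩ j).1.mul hg.1) (hf.1.mul (hg.pd hΩ j).1) l hx]
    exact congrArg₂ (· + ·) (hH₁e hx) (hH₂e hx)

theorem SmoothBar.const_mul (hΩ : IsOpen Ω) {f : En n → ℝ} (hf : SmoothBar Ω f) (c : ℝ) :
    SmoothBar Ω fun x => c * f x :=
  (smoothBar_const c).mul hΩ hf

theorem SmoothBar.pow (hΩ : IsOpen Ω) {f : En n → ℝ} (hf : SmoothBar Ω f) (k : ℕ) :
    SmoothBar Ω fun x => f x ^ k := by
  induction k with
  | zero => simpa using smoothBar_const 1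
  | succ k ih => simpa only [pow_succ] using ih.mul hΩ hf

theorem SmoothBar.sum (hΩ : IsOpen Ω) {ι : Type*} (t : Finset ι) {F : ι → En n → ℝ}
    (hF : ∀ i ∈ t, SmoothBar Ω (F i)) : SmoothBar Ω fun x => ∑ i ∈ t, F i x := by
  induction t using Finset.cons_induction with
  | empty => simpa using smoothBar_const 0
  | cons i t hi ih =>
    simp only [Finset.sum_cons]
    exact (hF i (Finset.mem_cons_self i t)).add hΩ
      (ih fun j hj => hF j (Finset.mem_cons_of_mem hj))

theorem SmoothBar.lap (hΩ : IsOpen Ω) {f : En n → ℝ} (hf : SmoothBar Ω f) :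
    SmoothBar Ω (_root_.lap f) :=
  SmoothBar.sum hΩ Finset.univ fun i _ => (hf.pd hΩ i).pd hΩ i

theorem SmoothBar.gradDot (hΩ : IsOpen Ω) {u v : En n → ℝ} (hu : SmoothBar Ω u)
    (hv : SmoothBar Ω v) : SmoothBar Ω (_root_.gradDot u v) :=
  SmoothBar.sum hΩ Finset.univ fun i _ => (hu.pd hΩ i).mul hΩ (hv.pd hΩ i)

end SmoothBarClosure

theorem singular_logarithmic_factor_general
    {n : ℕ} (Ω : Set (En n)) (hΩo : IsOpen Ω)
    (ρ : En n → ℝ) (ν : En n → Fin n → ℝ)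
    (hdef : DefiningFn Ω ρ ν) (hρ : SmoothBar Ω ρ)
    (q : En n → ℝ) (hq : SmoothBar Ω q)
    (hq' : ∀ x ∈ Ω, 1 - (∑ i, (pd i ρ x) ^ 2) = ρ x * q x)
    (a b c : ℝ) (s : ℕ)
    (hroot : a * s * ((s : ℝ) - 1) + b * s + c = 0)
    (ψ : En n → ℝ) (hψ : SmoothBar Ω ψ) :
    ∃ η₁ η₂ : En n → ℝ, SmoothBar Ω η₁ ∧ SmoothBar Ω η₂ ∧
      ∀ x ∈ Ω,
        LopEx ρ a b c (fun y => ψ y * ρ y ^ s * Real.log (ρ y)) x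
        = η₁ x * ρ x ^ (s + 1) * Real.log (ρ x) + η₂ x := by
  refine ⟨fun x => a * ρ x * lap ψ x + (2 * a * s + b) * gradDot ρ ψ x
      + a * s * ψ x * lap ρ x + c * ψ x * q x,
    fun x => ρ x ^ s * (2 * a * ρ x * gradDot ρ ψ x
      + ((2 * s - 1) * a + b) * ψ x * gradDot ρ ρ x + a * ρ x * ψ x * lap ρ x),
    ?_, ?_, fun x hx => ?_⟩
  · exact ((((hρ.const_mul hΩo a).mul hΩo (hψ.lap hΩo)).add hΩo
      ((hρ.gradDot hΩo hψ).const_mul hΩo _)).add hΩo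
      ((hψ.const_mul hΩo _).mul hΩo (hρ.lap hΩo))).add hΩo ((hψ.const_mul hΩo c).mul hΩo hq)
  · exact (hρ.pow hΩo s).mul hΩo ((((hρ.const_mul hΩo _).mul hΩo (hρ.gradDot hΩo hψ)).add hΩo
      ((hψ.const_mul hΩo _).mul hΩo (hρ.gradDot hΩo hρ))).add hΩo
      ((hρ.const_mul hΩo a).mul hΩo hψ |>.mul hΩo (hρ.lap hΩo)))
  · have hρx : ρ x ≠ 0 := (hdef.1 x hx).ne'
    have hgrad : gradDot ρ ρ x = 1 - ρ x * q x := by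
      rw [← hq' x hx]
      simp only [gradDot, sq, sub_sub_cancel]
    have hsmooth {f : En n → ℝ} (hf : SmoothBar Ω f) : ContDiffOn ℝ 2 f Ω :=
      hf.1.of_le ENat.LEInfty.out
    have hfun : (fun y => ψ y * ρ y ^ s * Real.log (ρ y))
        = fun y => ψ y * (fun t => t ^ s * Real.log t) (ρ y) :=
      funext fun y => mul_assoc _ _ _
    rw [hfun, lopEx_mul_comp a b c hΩo (hsmooth hψ) (hsmooth hρ) hdef.1
      (fun t ht => hasDerivAt_pow_mul_log s (ne_of_gt ht))
      (fun t ht => hasDerivAt_pow_mul_log_div s (ne_of_gt ht)) hx]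
    beta_reduce
    rw [hgrad]
    field_simp
    linear_combination ψ x * ρ x ^ s * Real.log (ρ x) * (1 - ρ x * q x) * hroot

/-- **Case 2 of Example 2.1 (logarithmic factors)**: if `s` is a positive integer
root of `as(s-1)+bs+c = 0`, then `L(ψρˢ log ρ) = η₁ρ^{s+1} log ρ + η₂`. -/
theorem singular_logarithmic_factor
    {n : ℕ} (Ω : Set (En n)) (hΩo : IsOpen Ω) (hΩb : Bornology.IsBounded Ω)
    (hΩconn : IsConnected Ω)
    (ρ : En n → ℝ) (ν : En n → Fin n → ℝ)
    (hdef : DefiningFn Ω ρ ν) (hρ : SmoothBar Ω ρ)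
    (q : En n → ℝ) (hq : SmoothBar Ω q)
    (hq' : ∀ x ∈ Ω, 1 - (∑ i, (pd i ρ x) ^ 2) = ρ x * q x)
    (a b c : ℝ) (s : ℕ) (ha : 0 < a) (hs : 0 < s)
    (hroot : a * s * ((s : ℝ) - 1) + b * s + c = 0)
    (ψ : En n → ℝ) (hψ : SmoothBar Ω ψ) :
    ∃ η₁ η₂ : En n → ℝ, SmoothBar Ω η₁ ∧ SmoothBar Ω η₂ ∧
      ∀ x ∈ Ω,
        LopEx ρ a b c (fun y => ψ y * ρ y ^ s * Real.log (ρ y)) x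
        = η₁ x * ρ x ^ (s + 1) * Real.log (ρ x) + η₂ x :=
  singular_logarithmic_factor_general Ω hΩo ρ ν hdef hρ q hq hq' a b c s hroot ψ hψ
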